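/- arXiv:2502.18144 — 3 statements merged into one kernel-verified Lean document; each statement's English description precedes it below -/
import Mathlib

section
/- Let G be a connected simple graph on the vertex set [n] and let S = {ker x_1, …, ker x_n, ker(x_1 + ⋯ + x_n)} ⊆ A_G. Then S generates A_G, i.e. ⟨S⟩_{A_G} = A_G. -/
open Submodule

/-! ## Basic definitions for hyperplane arrangements -/

/-- The linear form `∑_{i ∈ I} x_i` on `K^n`. -/
noncomputable def sumForm (n : ℕ) (K : Type*) [Field K] (I : Finset (Fin n)) :
    (Fin n → K) →ₗ[K] K :=
  ∑ i ∈ I, LinearMap.proj i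

/-- The hyperplane `H_I = ker (∑_{i ∈ I} x_i)` in `K^n`. -/
noncomputable def hypI (n : ℕ) (K : Type*) [Field K] (I : Finset (Fin n)) :
    Submodule K (Fin n → K) :=
  LinearMap.ker (sumForm n K I)

/-- The nonempty vertex subsets of `G` inducing connected subgraphs. -/
def connSets {n : ℕ} (G : SimpleGraph (Fin n)) : Set (Finset (Fin n)) :=
  {I | I.Nonempty ∧ (G.induce (I : Set (Fin n))).Connected}

/-- The connected subgraph arrangement `A_G(K)` in `K^n`. -/
noncomputable def connArr (K : Type*) [Field K] {n : ℕ} (G : SimpleGraph (Fin n)) :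
    Set (Submodule K (Fin n → K)) :=
  (hypI n K) '' (connSets G)

/-- The intersection lattice of a central arrangement: all intersections of
subfamilies of `A` (with the empty intersection being the ambient space `⊤`). -/
def lat {K V : Type*} [Field K] [AddCommGroup V] [Module K V]
    (A : Set (Submodule K V)) : Set (Submodule K V) :=
  {X | ∃ B ⊆ A, X = sInf B}

/-- A central arrangement: a finite set of hyperplanes (coatoms of the submodule
lattice) in `V`. -/
def IsCentralArr {K V : Type*} [Field K] [AddCommGroup V] [Module K V]
    (A : Set (Submodule K V)) : Prop :=
  A.Finite ∧ ∀ H ∈ A, IsCoatom H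

/-- Two arrangements in `V` are linearly isomorphic. -/
def LinIsom {K V : Type*} [Field K] [AddCommGroup V] [Module K V]
    (A B : Set (Submodule K V)) : Prop :=
  ∃ φ : V ≃ₗ[K] V, B = (Submodule.map (φ : V →ₗ[K] V)) '' A

/-- Two arrangements are `L`-equivalent: their intersection lattices are
isomorphic posets. -/
def LEquiv {K V W : Type*} [Field K] [AddCommGroup V] [Module K V]
    [AddCommGroup W] [Module K W]
    (A : Set (Submodule K V)) (B : Set (Submodule K W)) : Prop :=
  Nonempty (↥(lat A) ≃o ↥(lat B))

/-- An arrangement `A` in `V` is projectively unique if every central arrangement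
in `V` that is `L`-equivalent to `A` is linearly isomorphic to `A`. -/
def ProjUnique {K V : Type*} [Field K] [AddCommGroup V] [Module K V]
    (A : Set (Submodule K V)) : Prop :=
  ∀ B : Set (Submodule K V), IsCentralArr B → LEquiv B A → LinIsom B A

/-- `Gen_i(A,S)`. -/
def Gen {K V : Type*} [Field K] [AddCommGroup V] [Module K V]
    (A S : Set (Submodule K V)) : ℕ → Set (Submodule K V)
  | 0 => S
  | (i+1) => {H | H ∈ A ∧ ∃ J ⊆ lat (Gen A S i), H = sSup J}

/-- The subarrangement `⟨S⟩_A` of `A` generated by `S`. -/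
def genSpan {K V : Type*} [Field K] [AddCommGroup V] [Module K V]
    (A S : Set (Submodule K V)) : Set (Submodule K V) :=
  ⋃ i, Gen A S i

/-- An arrangement is irreducible if it is not (linearly isomorphic to)
a nontrivial product of two lower-dimensional arrangements. -/
def IsIrredArr {K V : Type*} [Field K] [AddCommGroup V] [Module K V]
    (A : Set (Submodule K V)) : Prop :=
  ¬ ∃ U W : Submodule K V, IsCompl U W ∧ U ≠ ⊥ ∧ W ≠ ⊥ ∧ ∀ H ∈ A, U ≤ H ∨ W ≤ H

/-! ## Freeness -/

/-- The linear form `f` as a degree one polynomial. -/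
noncomputable def toPoly {n : ℕ} {K : Type*} [Field K] (f : (Fin n → K) →ₗ[K] K) :
    MvPolynomial (Fin n) K :=
  ∑ i, MvPolynomial.C (f (Pi.single i 1)) * MvPolynomial.X i

/-- The module `D(A)` of logarithmic derivations of an arrangement in `K^n`:
all `θ` with `θ(α_H) ∈ (α_H)` for every defining form `α_H` of every `H ∈ A`. -/
noncomputable def logDer (K : Type*) [Field K] {n : ℕ}
    (A : Set (Submodule K (Fin n → K))) :
    Submodule (MvPolynomial (Fin n) K)
      (Derivation K (MvPolynomial (Fin n) K) (MvPolynomial (Fin n) K)) where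
  carrier := {θ | ∀ H ∈ A, ∀ f : (Fin n → K) →ₗ[K] K, LinearMap.ker f = H →
      θ (toPoly f) ∈ Ideal.span {toPoly f}}
  add_mem' := by
    intro a b ha hb H hH f hf
    simpa using add_mem (ha H hH f hf) (hb H hH f hf)
  zero_mem' := by
    intro H hH f hf
    simp
  smul_mem' := by
    intro c θ hθ H hH f hf
    simpa [smul_eq_mul] using Ideal.mul_mem_left _ c (hθ H hH f hf)

/-- An arrangement in `K^n` is free if its module of logarithmic derivations is
free over the polynomial ring. -/
def IsFreeArr (K : Type*) [Field K] {n : ℕ}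
    (A : Set (Submodule K (Fin n → K))) : Prop :=
  Module.Free (MvPolynomial (Fin n) K) ↥(logDer K A)

/-- Freeness with a prescribed tuple of exponents: there is a basis of `D(A)`
consisting of homogeneous derivations of the given degrees. -/
def IsFreeExp (K : Type*) [Field K] {n : ℕ} (A : Set (Submodule K (Fin n → K)))
    (e : Fin n → ℕ) : Prop :=
  ∃ b : Module.Basis (Fin n) (MvPolynomial (Fin n) K) ↥(logDer K A),
    ∀ i j, ((b i : Derivation K (MvPolynomial (Fin n) K) (MvPolynomial (Fin n) K))
      (MvPolynomial.X j)).IsHomogeneous (e i)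

/-- The restriction `A^X` of an arrangement to a flat `X`, as an arrangement in `X`. -/
def restrictArr {K V : Type*} [Field K] [AddCommGroup V] [Module K V]
    (A : Set (Submodule K V)) (X : Submodule K V) : Set (Submodule K ↥X) :=
  {Y | ∃ H ∈ A, ¬ X ≤ H ∧ Y = Submodule.comap X.subtype H}

/-- Freeness with prescribed exponents for an arrangement in an abstract space:
transport along a linear isomorphism with `K^d`. -/
def IsFreeExpOn {K W : Type*} [Field K] [AddCommGroup W] [Module K W]
    (A : Set (Submodule K W)) (d : ℕ) (e : Fin d → ℕ) : Prop :=
  ∃ φ : W ≃ₗ[K] (Fin d → K),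
    IsFreeExp K ((Submodule.map (φ : W →ₗ[K] (Fin d → K))) '' A) e

/-- Accuracy: `A` is free with (sorted) exponents `e₁ ≤ … ≤ e_n` and for each
`1 ≤ d ≤ n` some flat `X ∈ L(A)` of dimension `d` has free restriction `A^X`
with exponents `(e₁, …, e_d)`. -/
def IsAccurate (K : Type*) [Field K] {n : ℕ}
    (A : Set (Submodule K (Fin n → K))) : Prop :=
  ∃ e : Fin n → ℕ, Monotone e ∧ IsFreeExp K A e ∧
    ∀ d : ℕ, 1 ≤ d → ∀ (hdn : d ≤ n), ∃ X ∈ lat A, Module.finrank K ↥X = d ∧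
      IsFreeExpOn (restrictArr A X) d (fun i => e ⟨i.1, lt_of_lt_of_le i.2 hdn⟩)

/-! ## Graphs -/

/-- The path graph on vertices `0, 1, …, n-1` (consecutive vertices adjacent). -/
def pathGraph' (n : ℕ) : SimpleGraph (Fin n) :=
  SimpleGraph.fromRel (fun a b => a.1 + 1 = b.1)

/-- The almost-path graph `A_{n,k}` (vertices `1, …, n+1` of the paper are
`0, …, n` here): a path on `0, …, n-1` plus the vertex `n` joined to `k-1`. -/
def almostPathGraph (n k : ℕ) : SimpleGraph (Fin (n+1)) :=
  SimpleGraph.fromRel (fun a b => (a.1 + 1 = b.1 ∧ b.1 < n) ∨ (a.1 + 1 = k ∧ b.1 = n))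

/-- The path-with-triangle graph `Δ_{n,k}` (vertices `1, …, n+1` of the paper are
`0, …, n` here): a path on `0, …, n-1` plus the vertex `n` joined to `k-1` and `k`. -/
def pathTriangleGraph (n k : ℕ) : SimpleGraph (Fin (n+1)) :=
  SimpleGraph.fromRel (fun a b =>
    (a.1 + 1 = b.1 ∧ b.1 < n) ∨ ((a.1 + 1 = k ∨ a.1 = k) ∧ b.1 = n))

/-! ## Factored and inductively factored arrangements -/

/-- The localization `A_X`. -/
def locArr {K V : Type*} [Field K] [AddCommGroup V] [Module K V]
    (A : Set (Submodule K V)) (X : Submodule K V) : Set (Submodule K V) :=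
  {H | H ∈ A ∧ X ≤ H}

/-- `P` is a partition of the set `A` (into nonempty blocks). -/
def IsPartitionOf {α : Type*} (A : Set α) (P : Set (Set α)) : Prop :=
  (∀ B ∈ P, B.Nonempty) ∧ (∀ B ∈ P, B ⊆ A) ∧ ∀ a ∈ A, ∃! B, B ∈ P ∧ a ∈ B

/-- A partition of an arrangement is independent if any transversal choice of
hyperplanes, one from each block, is linearly independent (the codimension of the
intersection equals the number of blocks). -/
def IsIndepPartition {K V : Type*} [Field K] [AddCommGroup V] [Module K V]
    (P : Set (Set (Submodule K V))) : Prop :=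
  ∀ f : Set (Submodule K V) → Submodule K V, (∀ B ∈ P, f B ∈ B) →
    Module.finrank K V = P.ncard + Module.finrank K ↥(⨅ B ∈ P, f B)

/-- A nice partition (factorization) of an arrangement. -/
def IsNicePartition {K V : Type*} [Field K] [AddCommGroup V] [Module K V]
    (A : Set (Submodule K V)) (P : Set (Set (Submodule K V))) : Prop :=
  IsPartitionOf A P ∧ IsIndepPartition P ∧
    ∀ X ∈ lat A, X ≠ (⊤ : Submodule K V) →
      ∃ B ∈ P, ∃ H, B ∩ locArr A X = {H}

/-- An arrangement is factored (nice) if it admits a nice partition. -/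
def IsFactored {K V : Type*} [Field K] [AddCommGroup V] [Module K V]
    (A : Set (Submodule K V)) : Prop :=
  ∃ P, IsNicePartition A P

/-- Inductively factored arrangements (in coordinate spaces `K^d`, restrictions
being transported to a coordinate space by a linear isomorphism). -/
inductive IndFactored (K : Type) [Field K] :
    (d : ℕ) → Set (Submodule K (Fin d → K)) → Set (Set (Submodule K (Fin d → K))) → Prop
  | empty (d : ℕ) : IndFactored K d ∅ ∅
  | step (d : ℕ) (A : Set (Submodule K (Fin d → K)))
      (P : Set (Set (Submodule K (Fin d → K))))
      (B₁ : Set (Submodule K (Fin d → K))) (H₀ : Submodule K (Fin d → K))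
      (e : ℕ) (φ : ↥H₀ ≃ₗ[K] (Fin e → K))
      (hB₁ : B₁ ∈ P) (hH₀B : H₀ ∈ B₁) (hH₀A : H₀ ∈ A)
      (hbij : Set.BijOn (fun H => Submodule.comap H₀.subtype H) (A \ B₁)
        ((fun H => Submodule.comap H₀.subtype H) '' (A \ {H₀})))
      (hdel : IndFactored K d (A \ {H₀})
        {C | ∃ B ∈ P, C = B ∩ (A \ {H₀}) ∧ C.Nonempty})
      (hres : IndFactored K e
        ((fun Y => Submodule.map (φ : ↥H₀ →ₗ[K] (Fin e → K)) Y) ''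
          ((fun H => Submodule.comap H₀.subtype H) '' (A \ {H₀})))
        {C | ∃ B ∈ P, B ≠ B₁ ∧
          C = (fun Y => Submodule.map (φ : ↥H₀ →ₗ[K] (Fin e → K)) Y) ''
            ((fun H => Submodule.comap H₀.subtype H) '' B)}) :
      IndFactored K d A P

/-- Inductively free arrangements with their multisets of exponents. -/
inductive IndFree (K : Type) [Field K] :
    (d : ℕ) → Set (Submodule K (Fin d → K)) → Multiset ℕ → Prop
  | empty (d : ℕ) : IndFree K d ∅ (Multiset.replicate d 0)
  | step (d : ℕ) (A : Set (Submodule K (Fin d → K))) (H₀ : Submodule K (Fin d → K))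
      (m : ℕ) (φ : ↥H₀ ≃ₗ[K] (Fin m → K)) (E : Multiset ℕ) (e : ℕ)
      (hH₀ : H₀ ∈ A)
      (hdel : IndFree K d (A \ {H₀}) (e ::ₘ E))
      (hres : IndFree K m
        ((fun Y => Submodule.map (φ : ↥H₀ →ₗ[K] (Fin m → K)) Y) ''
          ((fun H => Submodule.comap H₀.subtype H) '' (A \ {H₀}))) E) :
      IndFree K d A ((e+1) ::ₘ E)

/-! ## Asphericity -/

/-- The complement of (the union of) a complex arrangement in `ℂ^n`. -/
def arrComp {n : ℕ} (A : Set (Submodule ℂ (Fin n → ℂ))) : Set (Fin n → ℂ) :=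
  {v | ∀ H ∈ A, v ∉ H}

/-- A space is aspherical if all its homotopy groups `π_m`, `m ≥ 2`, vanish. -/
def IsAspherical (X : Type*) [TopologicalSpace X] : Prop :=
  ∀ (x : X) (m : ℕ), 2 ≤ m → Subsingleton (HomotopyGroup (Fin m) X x)

/-- A complex arrangement is `K(π,1)` if its complement is aspherical. -/
def IsKPi1 {n : ℕ} (A : Set (Submodule ℂ (Fin n → ℂ))) : Prop :=
  IsAspherical ↥(arrComp A)

/-! ## Formality -/

/-- Formality: all linear dependencies among (any choice of) defining forms of the
hyperplanes are generated by the dependencies supported on rank-two flats. -/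
def IsFormal {K V : Type*} [Field K] [AddCommGroup V] [Module K V]
    (A : Set (Submodule K V)) : Prop :=
  ∀ α : Submodule K V → (V →ₗ[K] K),
    (∀ H ∈ A, LinearMap.ker (α H) = H) →
    ∀ c : Submodule K V →₀ K, ↑c.support ⊆ A →
      (∑ H ∈ c.support, c H • α H) = 0 →
      c ∈ Submodule.span K
        {r : Submodule K V →₀ K | ↑r.support ⊆ A ∧
          (∑ H ∈ r.support, r H • α H) = 0 ∧
          ∃ X ∈ lat A, Module.finrank K (V ⧸ X) = 2 ∧ ∀ H ∈ r.support, X ≤ H}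

/-- Combinatorial formality. -/
def IsCombFormal {K V : Type*} [Field K] [AddCommGroup V] [Module K V]
    (A : Set (Submodule K V)) : Prop :=
  IsFormal A ∧ ∀ (K' : Type) [Field K'] (m : ℕ) (B : Set (Submodule K' (Fin m → K'))),
    IsCentralArr B → Nonempty (↥(lat B) ≃o ↥(lat A)) → IsFormal B

/-! ## Line closure -/

/-- `C` is a line-closed subset of the arrangement `A`. -/
def IsLineClosed {K V : Type*} [Field K] [AddCommGroup V] [Module K V]
    (A C : Set (Submodule K V)) : Prop :=
  ∀ H ∈ C, ∀ H' ∈ C, {H'' | H'' ∈ A ∧ H ⊓ H' ≤ H''} ⊆ C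

/-- The line closure of `B` in `A`. -/
def lineClosure {K V : Type*} [Field K] [AddCommGroup V] [Module K V]
    (A B : Set (Submodule K V)) : Set (Submodule K V) :=
  ⋂₀ {C | B ⊆ C ∧ C ⊆ A ∧ IsLineClosed A C}

/-! ## MAT-freeness -/

/-- MAT-freeness of an arrangement in `K^n`. -/
def IsMATFree (K : Type*) [Field K] {n : ℕ}
    (A : Set (Submodule K (Fin n → K))) : Prop :=
  ∃ (m : ℕ) (π : Fin m → Set (Submodule K (Fin n → K))),
    (⋃ i, π i) = A ∧
    (∀ i, (π i).Nonempty) ∧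
    (∀ i j, i ≠ j → Disjoint (π i) (π j)) ∧
    ∀ j : Fin m,
      (n = (π j).ncard + Module.finrank K ↥(sInf (π j) : Submodule K (Fin n → K))) ∧
      (¬ (SetLike.coe (sInf (π j) : Submodule K (Fin n → K)) ⊆
          ⋃ H ∈ {H | ∃ i : Fin m, i < j ∧ H ∈ π i}, SetLike.coe H)) ∧
      ∀ H ∈ π j,
        {H' | ∃ i : Fin m, i < j ∧ H' ∈ π i}.ncard =
          ((fun H' => H' ⊓ H) '' {H' | ∃ i : Fin m, i < j ∧ H' ∈ π i}).ncard + j.1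

/-! ## Subarrangements by size, supersolvability -/

/-- The ideal subarrangement `A_G^s` of hyperplanes `H_I` with `|I| ≤ s`. -/
noncomputable def AGs (K : Type*) [Field K] {n : ℕ} (G : SimpleGraph (Fin n)) (s : ℕ) :
    Set (Submodule K (Fin n → K)) :=
  hypI n K '' {I | I ∈ connSets G ∧ I.card ≤ s}

/-- The closure of a subspace in the intersection lattice of `A`. -/
noncomputable def flatClosure {K V : Type*} [Field K] [AddCommGroup V] [Module K V]
    (A : Set (Submodule K V)) (Z : Submodule K V) : Submodule K V :=
  sInf {H | H ∈ A ∧ Z ≤ H}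

/-- The rank (codimension) of a subspace of `K^n`. -/
noncomputable def arrRank (K : Type*) [Field K] {n : ℕ}
    (X : Submodule K (Fin n → K)) : ℕ :=
  n - Module.finrank K ↥X

/-- A modular flat of an arrangement. -/
noncomputable def IsModularFlat (K : Type*) [Field K] {n : ℕ}
    (A : Set (Submodule K (Fin n → K))) (X : Submodule K (Fin n → K)) : Prop :=
  X ∈ lat A ∧ ∀ Y ∈ lat A,
    arrRank K X + arrRank K Y =
      arrRank K (X ⊓ Y) + arrRank K (flatClosure A (X ⊔ Y))

/-- Supersolvability: a maximal chain of modular flats in `L(A)`. -/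
noncomputable def IsSupersolvable (K : Type*) [Field K] {n : ℕ}
    (A : Set (Submodule K (Fin n → K))) : Prop :=
  ∃ c : ℕ → Submodule K (Fin n → K),
    c 0 = ⊤ ∧ c (arrRank K (sInf A)) = sInf A ∧
    (∀ i ≤ arrRank K (sInf A), IsModularFlat K A (c i) ∧ arrRank K (c i) = i) ∧
    ∀ i < arrRank K (sInf A), c (i + 1) ≤ c i

/-!
Every hyperplane `H_I` is the sum of two flats of `L(S)`: the vectors supported on `I` with
total sum zero (the intersection of `ker (x_1 + ⋯ + x_n)` with the `ker x_j`, `j ∉ I`) and the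
vectors vanishing on `I` (the intersection of the `ker x_j`, `j ∈ I`). Splitting `v ∈ H_I` into
its parts on and off `I` shows that this sum is all of `H_I`, so `A_G` is already `Gen_1(A_G, S)`.
-/

section Generation

variable {K V : Type*} [Field K] [AddCommGroup V] [Module K V]

theorem sInf_mem_lat {A B : Set (Submodule K V)} (hB : B ⊆ A) : sInf B ∈ lat A :=
  ⟨B, hB, rfl⟩

theorem genSpan_eq_of_forall_eq_sSup {A S : Set (Submodule K V)} (hS : S ⊆ A)
    (hA : ∀ H ∈ A, ∃ J ⊆ lat S, H = sSup J) : genSpan A S = A := by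
  refine subset_antisymm (Set.iUnion_subset fun i => ?_) fun H hH =>
    Set.mem_iUnion.2 ⟨1, hH, hA H hH⟩
  cases i with
  | zero => exact hS
  | succ i => exact fun _ hH => hH.1

end Generation

section Hyperplanes

variable {n : ℕ} {K : Type*} [Field K]

theorem mem_hypI {I : Finset (Fin n)} {v : Fin n → K} :
    v ∈ hypI n K I ↔ ∑ i ∈ I, v i = 0 := by
  simp [hypI, sumForm, LinearMap.sum_apply]

theorem mem_sInf_hypI_singleton {s : Set (Fin n)} {v : Fin n → K} :
    v ∈ sInf ((fun j => hypI n K {j}) '' s) ↔ ∀ j ∈ s, v j = 0 := by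
  simp [Submodule.mem_sInf, mem_hypI]

theorem hypI_eq_sup (I : Finset (Fin n)) :
    hypI n K I =
      sInf (insert (hypI n K Finset.univ) ((fun j => hypI n K {j}) '' (↑I)ᶜ)) ⊔
        sInf ((fun j => hypI n K {j}) '' ↑I) := by
  refine le_antisymm (fun v hv => ?_) (sup_le (fun v hv => ?_) fun v hv => ?_)
  · rw [← Set.indicator_self_add_compl (↑I) v]
    refine Submodule.add_mem_sup ?_ ?_
    · rw [sInf_insert, Submodule.mem_inf, mem_hypI, mem_sInf_hypI_singleton,
        Finset.sum_indicator_subset v (Finset.subset_univ I)]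
      exact ⟨mem_hypI.1 hv, fun j hj => Set.indicator_of_notMem hj v⟩
    · rw [mem_sInf_hypI_singleton]
      exact fun j hj => Set.indicator_of_notMem (Set.notMem_compl_iff.2 hj) v
  · rw [sInf_insert, Submodule.mem_inf, mem_hypI, mem_sInf_hypI_singleton] at hv
    rw [mem_hypI, Finset.sum_subset (Finset.subset_univ I) fun j _ hj => hv.2 j hj]
    exact hv.1
  · rw [mem_sInf_hypI_singleton] at hv
    exact mem_hypI.2 (Finset.sum_eq_zero hv)

end Hyperplanes

theorem singleton_mem_connSets {n : ℕ} (G : SimpleGraph (Fin n)) (i : Fin n) :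
    {i} ∈ connSets G := by
  refine ⟨Finset.singleton_nonempty i, ?_⟩
  rw [Finset.coe_singleton]
  exact SimpleGraph.Connected.of_subsingleton

theorem univ_mem_connSets {n : ℕ} {G : SimpleGraph (Fin n)} (hG : G.Connected) :
    Finset.univ ∈ connSets G := by
  have := hG.nonempty
  refine ⟨Finset.univ_nonempty, ?_⟩
  rw [Finset.coe_univ]
  exact (SimpleGraph.induceUnivIso G).connected_iff.2 hG

/-- For a connected simple graph `G` on `[n]`, the set
`S = {ker x_1, …, ker x_n, ker (x_1 + ⋯ + x_n)}` generates `A_G`. -/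
theorem connArr_genSpan (n : ℕ) (G : SimpleGraph (Fin n)) (hG : G.Connected) :
    genSpan (connArr ℚ G)
      ((Set.range fun i : Fin n => hypI n ℚ {i}) ∪ {hypI n ℚ Finset.univ}) =
      connArr ℚ G := by
  refine genSpan_eq_of_forall_eq_sSup ?_ ?_
  · rintro H (⟨j, rfl⟩ | rfl)
    exacts [⟨_, singleton_mem_connSets G j, rfl⟩, ⟨_, univ_mem_connSets hG, rfl⟩]
  · rintro H ⟨I, -, rfl⟩
    refine ⟨_, Set.pair_subset (sInf_mem_lat ?_) (sInf_mem_lat ?_),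
      (hypI_eq_sup I).trans sSup_pair.symm⟩
    · rintro _ (rfl | ⟨j, -, rfl⟩)
      exacts [Or.inr rfl, Or.inl ⟨j, rfl⟩]
    · rintro _ ⟨j, -, rfl⟩
      exact Or.inl ⟨j, rfl⟩
end

section
/- Let A be an essential and irreducible central arrangement in V ≅ K^ℓ. If there is a subset S ⊆ A with ⟨S⟩_A = A and |S| = ℓ + 1, then A is projectively unique. -/
open Submodule

/-!
Enumerate `S = {h₀, …, h_ℓ}`. Every hyperplane generated by `S` contains `⋂ S`, so `⋂ S = 0`
since `A` is essential. If the hyperplanes other than `hᵢ` met in `Y ≠ 0`, then `V = Y ⊕ hᵢ` and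
every generator contains `Y` or `hᵢ`; this splitting passes to intersections and then to sums of
flats, so all of `A` would split, contradicting irreducibility. Hence `S` is in general position,
and so is its image under a lattice isomorphism `L(A) ≅ L(B)`, which preserves dimension. Two
families of `ℓ + 1` hyperplanes in general position in `K^ℓ` are linearly equivalent (both are
equivalent to `x₀, …, x_{ℓ-1}, x₀ + ⋯ + x_{ℓ-1}`), so after a linear change of coordinates the
lattice isomorphism agrees with it on `S`. If it agrees with the linear map on `Gen_i`, it does
on the flats of `L(Gen_i)`; for a hyperplane `H = ∑ X` of `Gen_{i+1}` the image of `H` under the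
lattice isomorphism then contains its image under the linear map, and both being hyperplanes
they are equal. So the two agree on all of `A`, and `B` is the linear image of `A`.
-/

open Module

variable {K V : Type*} [Field K] [AddCommGroup V] [Module K V]

section Hyperplane

theorem finrank_add_one_of_isCoatom [FiniteDimensional K V] {H : Submodule K V}
    (hH : IsCoatom H) : finrank K H + 1 = finrank K V := by
  obtain ⟨x, -, hx⟩ := SetLike.exists_of_lt hH.lt_top
  have hx0 : x ≠ 0 := fun h => hx (h ▸ H.zero_mem)
  rw [← Submodule.finrank_add_eq_of_isCompl (isCompl_span_singleton_of_isCoatom_of_notMem hH hx),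
    finrank_span_singleton hx0]

theorem exists_ker_eq_of_isCoatom {H : Submodule K V} (hH : IsCoatom H) :
    ∃ f : Dual K V, LinearMap.ker f = H := by
  obtain ⟨x, -, hx⟩ := SetLike.exists_of_lt hH.lt_top
  obtain ⟨f, hfx, hfH⟩ := exists_dual_map_eq_bot_of_notMem hx inferInstance
  have hle : H ≤ LinearMap.ker f := LinearMap.le_ker_iff_map.mpr hfH
  refine ⟨f, ((hH.le_iff.mp hle).resolve_left fun htop => hfx ?_)⟩
  exact LinearMap.mem_ker.mp (htop ▸ Submodule.mem_top)

end Hyperplane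

section Lattice

theorem mem_lat_of_mem {A : Set (Submodule K V)} {H : Submodule K V} (hH : H ∈ A) :
    H ∈ lat A :=
  ⟨{H}, Set.singleton_subset_iff.mpr hH, sInf_singleton.symm⟩

theorem top_mem_lat (A : Set (Submodule K V)) : ⊤ ∈ lat A :=
  ⟨∅, Set.empty_subset A, sInf_empty.symm⟩

theorem iInf_mem_lat {A : Set (Submodule K V)} {ι : Sort*} {f : ι → Submodule K V}
    (hf : ∀ j, f j ∈ lat A) : ⨅ j, f j ∈ lat A := by
  choose C hCA hC using hf
  exact ⟨⋃ j, C j, Set.iUnion_subset hCA, by simp only [hC, sInf_eq_iInf, iInf_iUnion]⟩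

theorem coe_orderIso_iInf {A B : Set (Submodule K V)} (χ : lat A ≃o lat B) {ι : Sort*}
    {f : ι → Submodule K V} (hf : ∀ j, f j ∈ lat A) :
    (χ ⟨⨅ j, f j, iInf_mem_lat hf⟩ : Submodule K V) = ⨅ j, (χ ⟨f j, hf j⟩ : Submodule K V) := by
  refine le_antisymm (le_iInf fun j => χ.monotone (iInf_le f j)) ?_
  have hmem : ⨅ j, (χ ⟨f j, hf j⟩ : Submodule K V) ∈ lat B :=
    iInf_mem_lat fun j => (χ ⟨f j, hf j⟩).2
  change (⟨_, hmem⟩ : lat B) ≤ χ ⟨⨅ j, f j, iInf_mem_lat hf⟩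
  rw [← χ.symm_apply_le, ← Subtype.coe_le_coe]
  refine le_iInf fun j => ?_
  exact (χ.symm_apply_le.mpr <| Subtype.coe_le_coe.mp <|
    iInf_le (fun j => (χ ⟨f j, hf j⟩ : Submodule K V)) j : χ.symm ⟨_, hmem⟩ ≤ ⟨f j, hf j⟩)

end Lattice

section Rank

variable [FiniteDimensional K V]

theorem finrank_head_add_length_le {L : Set (Submodule K V)} (p : LTSeries L) :
    finrank K p.head.1 + p.length ≤ finrank K V := by
  have hmono : StrictMono fun X : L => finrank K X.1 := fun _ _ h =>
    Submodule.finrank_lt_finrank_of_lt h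
  have := (p.map _ hmono).head_add_length_le_nat
  rw [LTSeries.head_map, LTSeries.last_map] at this
  exact this.trans (Submodule.finrank_le _)

theorem exists_ltSeries_head_eq_sInf {A C : Set (Submodule K V)} (hA : ∀ H ∈ A, IsCoatom H)
    (hC : C.Finite) (hCA : C ⊆ A) :
    ∃ p : LTSeries (lat A), (p.head : Submodule K V) = sInf C ∧
      finrank K (sInf C : Submodule K V) + p.length = finrank K V := by
  induction C, hC using Set.Finite.induction_on with
  | empty =>
    refine ⟨RelSeries.singleton _ ⟨⊤, top_mem_lat A⟩, sInf_empty.symm, ?_⟩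
    rw [sInf_empty, finrank_top, RelSeries.singleton_length, add_zero]
  | @insert H C _ _ ih =>
    obtain ⟨p, hp, hlen⟩ := ih ((Set.subset_insert H C).trans hCA)
    have hH := hA H (hCA (Set.mem_insert H C))
    rw [sInf_insert]
    by_cases hle : sInf C ≤ H
    · exact ⟨p, by rw [inf_eq_right.mpr hle, hp], by rw [inf_eq_right.mpr hle, hlen]⟩
    have hmem : H ⊓ sInf C ∈ lat A := ⟨insert H C, hCA, sInf_insert.symm⟩
    have hlt : (⟨_, hmem⟩ : lat A) < p.head := by
      rw [← Subtype.coe_lt_coe, hp]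
      exact inf_lt_right.mpr hle
    refine ⟨p.cons _ hlt, rfl, ?_⟩
    have hsup : H ⊔ sInf C = ⊤ := hH.lt_iff.mp (left_lt_sup.mpr hle)
    have hdim := Submodule.finrank_sup_add_finrank_inf_eq H (sInf C)
    rw [hsup, finrank_top] at hdim
    have := finrank_add_one_of_isCoatom hH
    rw [RelSeries.cons_length]
    omega

theorem finrank_orderIso_le {A B : Set (Submodule K V)} (hA : IsCentralArr A)
    (χ : lat A ≃o lat B) (X : lat A) : finrank K (χ X : Submodule K V) ≤ finrank K X := by
  obtain ⟨C, hCA, hX⟩ := X.2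
  obtain ⟨p, hp, hlen⟩ := exists_ltSeries_head_eq_sInf hA.2 (hA.1.subset hCA) hCA
  have := finrank_head_add_length_le (p.map χ χ.strictMono)
  rw [LTSeries.head_map, (Subtype.ext (hp.trans hX.symm) : p.head = X)] at this
  have hlen' : (p.map χ χ.strictMono).length = p.length := rfl
  rw [hX]
  omega

/-- The codimension of a flat is the length of the longest chain of flats above it. -/
theorem finrank_orderIso {A B : Set (Submodule K V)} (hA : IsCentralArr A) (hB : IsCentralArr B)
    (χ : lat A ≃o lat B) (X : lat A) : finrank K (χ X : Submodule K V) = finrank K X :=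
  le_antisymm (finrank_orderIso_le hA χ X) (by
    have := finrank_orderIso_le hB χ.symm (χ X)
    rwa [χ.symm_apply_apply] at this)

theorem mem_of_mem_lat_of_finrank_add_one {A : Set (Submodule K V)} (hA : ∀ H ∈ A, IsCoatom H)
    {X : Submodule K V} (hX : X ∈ lat A) (hfr : finrank K X + 1 = finrank K V) : X ∈ A := by
  obtain ⟨C, hCA, rfl⟩ := hX
  obtain ⟨H, hH⟩ : C.Nonempty := by
    rw [Set.nonempty_iff_ne_empty]
    rintro rfl
    rw [sInf_empty, finrank_top] at hfr
    omega
  have := finrank_add_one_of_isCoatom (hA H (hCA hH))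
  rw [Submodule.eq_of_le_of_finrank_le (sInf_le hH) (by omega)]
  exact hCA hH

theorem coe_orderIso_mem {A B : Set (Submodule K V)} (hA : IsCentralArr A) (hB : IsCentralArr B)
    (χ : lat A ≃o lat B) {H : Submodule K V} (hH : H ∈ A) :
    (χ ⟨H, mem_lat_of_mem hH⟩ : Submodule K V) ∈ B := by
  refine mem_of_mem_lat_of_finrank_add_one hB.2 (χ _).2 ?_
  rw [finrank_orderIso hA hB]
  exact finrank_add_one_of_isCoatom (hA.2 H hH)

end Rank

section Generation

theorem bot_notMem_of_one_lt_ncard {α : Type*} [PartialOrder α] [BoundedOrder α] {A S : Set α}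
    (hA : ∀ H ∈ A, IsCoatom H) (hSA : S ⊆ A) (hS : 1 < S.ncard) : ⊥ ∉ A := by
  intro hbot
  have hS_bot : S ⊆ {⊥} := fun H hH =>
    ((hA ⊥ hbot).le_iff.mp bot_le).resolve_left (hA H (hSA hH)).1
  have := Set.ncard_le_ncard hS_bot
  rw [Set.ncard_singleton] at this
  omega

theorem Gen_subset {A S : Set (Submodule K V)} (hSA : S ⊆ A) : ∀ i, Gen A S i ⊆ A
  | 0 => hSA
  | _ + 1 => fun _ hH => hH.1

theorem sInf_le_of_mem_genSpan {A S : Set (Submodule K V)} (hbot : ⊥ ∉ A) {H : Submodule K V}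
    (hH : H ∈ genSpan A S) : sInf S ≤ H := by
  obtain ⟨i, hi⟩ := Set.mem_iUnion.mp hH
  clear hH
  induction i generalizing H with
  | zero => exact sInf_le hi
  | succ i ih =>
    obtain ⟨hHA, J, hJ, rfl⟩ := hi
    obtain ⟨X, hX⟩ : J.Nonempty := by
      rw [Set.nonempty_iff_ne_empty]
      rintro rfl
      exact hbot (sSup_empty (α := Submodule K V) ▸ hHA)
    obtain ⟨C, hC, rfl⟩ := hJ hX
    exact (le_sInf fun H' hH' => ih (hC hH')).trans (le_sSup hX)

theorem sInf_eq_bot_of_genSpan {A S : Set (Submodule K V)} (hbot : ⊥ ∉ A)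
    (hgen : genSpan A S = A) (hess : sInf A = ⊥) : sInf S = ⊥ := by
  rw [eq_bot_iff, ← hess]
  exact le_sInf fun H hH => sInf_le_of_mem_genSpan hbot (hgen.symm ▸ hH)

theorem sInf_le_inf_sup_inf {U W : Submodule K V} (hUW : Codisjoint U W)
    {C : Set (Submodule K V)} (hC : ∀ H ∈ C, U ≤ H ∨ W ≤ H) :
    sInf C ≤ (sInf C ⊓ U) ⊔ (sInf C ⊓ W) := by
  intro x hx
  obtain ⟨u, hu, w, hw, rfl⟩ := Submodule.mem_sup.mp
    (hUW.eq_top ▸ Submodule.mem_top : x ∈ U ⊔ W)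
  have hu' : u ∈ sInf C := by
    refine Submodule.mem_sInf.mpr fun H hH => ?_
    have huw := Submodule.mem_sInf.mp hx H hH
    rcases hC H hH with hUH | hWH
    · exact hUH hu
    · simpa using H.sub_mem huw (hWH hw)
  have hw' : w ∈ sInf C := by simpa using Submodule.sub_mem _ hx hu'
  exact Submodule.mem_sup.mpr ⟨u, ⟨hu', hu⟩, w, ⟨hw', hw⟩, rfl⟩

theorem IsCoatom.le_or_le_of_le_inf_sup_inf {α : Type*} [Lattice α] [BoundedOrder α]
    [IsModularLattice α] {U W H : α} (hUW : IsCompl U W) (hH : IsCoatom H)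
    (hsplit : H ≤ (H ⊓ U) ⊔ (H ⊓ W)) : U ≤ H ∨ W ≤ H := by
  refine or_iff_not_imp_right.mpr fun hW => ?_
  have htop : (H ⊓ U) ⊔ W = ⊤ := top_le_iff.mp <|
    (hH.lt_iff.mp (left_lt_sup.mpr hW)).ge.trans
      (sup_le (hsplit.trans (sup_le_sup_left inf_le_right _)) le_sup_right)
  calc U = ((H ⊓ U) ⊔ W) ⊓ U := by rw [htop, top_inf_eq]
    _ = H ⊓ U := by rw [sup_inf_assoc_of_le W inf_le_right, hUW.symm.inf_eq_bot, sup_bot_eq]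
    _ ≤ H := inf_le_left

theorem le_or_le_of_mem_genSpan {A S : Set (Submodule K V)}
    (hA : ∀ H ∈ A, IsCoatom H) {U W : Submodule K V} (hUW : IsCompl U W)
    (hS : ∀ H ∈ S, U ≤ H ∨ W ≤ H) {H : Submodule K V} (hH : H ∈ genSpan A S) :
    U ≤ H ∨ W ≤ H := by
  obtain ⟨i, hi⟩ := Set.mem_iUnion.mp hH
  clear hH
  induction i generalizing H with
  | zero => exact hS H hi
  | succ i ih =>
    obtain ⟨hHA, J, hJ, rfl⟩ := hi
    refine (hA _ hHA).le_or_le_of_le_inf_sup_inf hUW (sSup_le fun X hX => ?_)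
    obtain ⟨C, hC, rfl⟩ := hJ hX
    refine (sInf_le_inf_sup_inf hUW.codisjoint fun H' hH' => ih (hC hH')).trans ?_
    gcongr <;> exact le_sSup hX

def InGeneralPosition {n : ℕ} (h : Fin (n + 1) → Submodule K V) : Prop :=
  ∀ i : Fin (n + 1), ⨅ j, h (i.succAbove j) = ⊥

theorem inGeneralPosition_of_genSpan {A : Set (Submodule K V)} (hA : ∀ H ∈ A, IsCoatom H)
    (hbot : ⊥ ∉ A) (hirr : IsIrredArr A) {n : ℕ} {h : Fin (n + 1) → Submodule K V}
    (hhA : ∀ j, h j ∈ A) (hgen : genSpan A (Set.range h) = A) (hess : ⨅ j, h j = ⊥) :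
    InGeneralPosition h := by
  intro i
  by_contra hY
  set Y := ⨅ j, h (i.succAbove j)
  have hdisj : Disjoint Y (h i) := by
    refine disjoint_iff_inf_le.mpr (hess ▸ le_iInf fun j => ?_)
    rcases Fin.eq_self_or_eq_succAbove i j with rfl | ⟨k, rfl⟩
    · exact inf_le_right
    · exact inf_le_left.trans (iInf_le _ k)
  have hcodisj : Codisjoint Y (h i) :=
    codisjoint_iff.mpr <| (hA _ (hhA i)).lt_iff.mp <|
      right_lt_sup.mpr fun hle => hY (hdisj.eq_bot_of_le hle)
  refine hirr ⟨Y, h i, ⟨hdisj, hcodisj⟩, hY, fun h0 => hbot (h0 ▸ hhA i), fun H hH => ?_⟩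
  refine le_or_le_of_mem_genSpan hA ⟨hdisj, hcodisj⟩ ?_ (hgen.symm ▸ hH)
  rintro _ ⟨j, rfl⟩
  rcases Fin.eq_self_or_eq_succAbove i j with rfl | ⟨k, rfl⟩
  · exact Or.inr le_rfl
  · exact Or.inl (iInf_le _ k)

end Generation

section Normalization

def stdForm (K : Type*) [Field K] (ℓ : ℕ) : Fin (ℓ + 1) → Dual K (Fin ℓ → K) :=
  Fin.lastCases (∑ j, LinearMap.proj j) LinearMap.proj

variable [FiniteDimensional K V]

theorem InGeneralPosition.exists_linearEquiv {ℓ : ℕ} (hV : finrank K V = ℓ)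
    {h : Fin (ℓ + 1) → Submodule K V} (hco : ∀ j, IsCoatom (h j)) (hgp : InGeneralPosition h) :
    ∃ Ψ : V ≃ₗ[K] (Fin ℓ → K), ∀ j, h j = LinearMap.ker (stdForm K ℓ j ∘ₗ Ψ) := by
  classical
  choose α hα using fun j => exists_ker_eq_of_isCoatom (hco j)
  have hinj : Function.Injective (LinearMap.pi fun j : Fin ℓ => α j.castSucc) := by
    rw [← LinearMap.ker_eq_bot, LinearMap.ker_pi]
    simpa only [hα, Fin.succAbove_last] using hgp (Fin.last ℓ)
  set Φ := LinearMap.linearEquivOfInjective _ hinj (by rw [hV, finrank_fin_fun])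
  have hΦ : ∀ v j, Φ v j = α j.castSucc v := fun _ _ => rfl
  set c : Fin ℓ → K := fun j => α (Fin.last ℓ) (Φ.symm (Pi.single j 1))
  have hc : ∀ j, c j ≠ 0 := by
    intro j hcj
    have hmem : ∀ m, m ≠ j.castSucc → Φ.symm (Pi.single j 1) ∈ h m := by
      intro m hm
      rw [← hα m, LinearMap.mem_ker]
      induction m using Fin.lastCases with
      | last => exact hcj
      | cast k =>
        rw [← hΦ, LinearEquiv.apply_symm_apply,
          Pi.single_eq_of_ne fun hkj => hm (congrArg Fin.castSucc hkj)]
    have h0 := hgp j.castSucc ▸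
      (Submodule.mem_iInf _).mpr fun k => hmem _ (Fin.succAbove_ne _ k)
    simpa using congrArg Φ ((Submodule.mem_bot K).mp h0)
  have hlast : ∀ v, α (Fin.last ℓ) v = ∑ j, c j * Φ v j := by
    intro v
    conv_lhs => rw [← Φ.symm_apply_apply v, ← Finset.univ_sum_single (Φ v)]
    simp only [map_sum, c]
    refine Finset.sum_congr rfl fun j _ => ?_
    rw [mul_comm, ← smul_eq_mul, ← map_smul, ← map_smul, ← Pi.single_smul', smul_eq_mul, mul_one]
  -- rescaling the coordinates of `Φ` by `c` turns the last form into their sum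
  refine ⟨Φ.trans (LinearEquiv.piCongrRight fun j => LinearEquiv.smulOfNeZero K K (c j) (hc j)),
    fun j => ?_⟩
  induction j using Fin.lastCases with
  | last =>
    ext v
    simp [stdForm, ← hα, hlast]
  | cast j =>
    ext v
    simp [stdForm, ← hα, hc j, hΦ]

theorem InGeneralPosition.exists_linearEquiv_comap_eq {ℓ : ℕ} (hV : finrank K V = ℓ)
    {h h' : Fin (ℓ + 1) → Submodule K V} (hco : ∀ j, IsCoatom (h j)) (hgp : InGeneralPosition h)
    (hco' : ∀ j, IsCoatom (h' j)) (hgp' : InGeneralPosition h') :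
    ∃ φ : V ≃ₗ[K] V, ∀ j, h' j = (h j).comap (φ : V →ₗ[K] V) := by
  obtain ⟨Ψ, hΨ⟩ := hgp.exists_linearEquiv hV hco
  obtain ⟨Ψ', hΨ'⟩ := hgp'.exists_linearEquiv hV hco'
  refine ⟨Ψ'.trans Ψ.symm, fun j => ?_⟩
  rw [hΨ j, hΨ' j, ← LinearMap.ker_comp]
  congr 1
  ext v
  simp

end Normalization

section LatticeIsomorphism

variable [FiniteDimensional K V]

theorem InGeneralPosition.orderIso {A B : Set (Submodule K V)} (hA : IsCentralArr A)
    (hB : IsCentralArr B) (χ : lat A ≃o lat B) {n : ℕ} {h : Fin (n + 1) → Submodule K V}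
    (hhA : ∀ j, h j ∈ A) (hgp : InGeneralPosition h) :
    InGeneralPosition fun j => (χ ⟨h j, mem_lat_of_mem (hhA j)⟩ : Submodule K V) := by
  intro i
  have hmem : ∀ j, h (i.succAbove j) ∈ lat A := fun j => mem_lat_of_mem (hhA _)
  rw [← coe_orderIso_iInf χ hmem, ← Submodule.finrank_eq_zero, finrank_orderIso hA hB]
  change finrank K (⨅ j, h (i.succAbove j) : Submodule K V) = 0
  rw [hgp i, finrank_bot]

theorem coe_orderIso_eq_of_mem_genSpan {A B S : Set (Submodule K V)} (hA : IsCentralArr A)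
    (hB : IsCentralArr B) (hSA : S ⊆ A) (χ : lat A ≃o lat B) (E : Submodule K V ≃o Submodule K V)
    (hS : ∀ H (hH : H ∈ S), (χ ⟨H, mem_lat_of_mem (hSA hH)⟩ : Submodule K V) = E H)
    {H : Submodule K V} (hH : H ∈ A) (hHS : H ∈ genSpan A S) :
    (χ ⟨H, mem_lat_of_mem hH⟩ : Submodule K V) = E H := by
  obtain ⟨i, hi⟩ := Set.mem_iUnion.mp hHS
  clear hHS
  induction i generalizing H with
  | zero => exact hS H hi
  | succ i ih =>
    obtain ⟨-, J, hJ, rfl⟩ := hi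
    have hle : E (sSup J) ≤ χ ⟨sSup J, mem_lat_of_mem hH⟩ := by
      rw [E.map_sSup]
      refine iSup₂_le fun X hX => ?_
      obtain ⟨C, hC, rfl⟩ := hJ hX
      have hCA : ∀ H' : C, H'.1 ∈ A := fun H' => Gen_subset hSA i (hC H'.2)
      have hlat : ∀ H' : C, H'.1 ∈ lat A := fun H' => mem_lat_of_mem (hCA H')
      have hfix : (χ ⟨⨅ H' : C, H'.1, iInf_mem_lat hlat⟩ : Submodule K V) = E (sInf C) := by
        rw [coe_orderIso_iInf χ hlat, sInf_eq_iInf', E.map_iInf]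
        exact iInf_congr fun H' => ih (hCA H') (hC H'.2)
      have hXJ : (⟨⨅ H' : C, H'.1, iInf_mem_lat hlat⟩ : lat A) ≤ ⟨sSup J, mem_lat_of_mem hH⟩ :=
        show ⨅ H' : C, H'.1 ≤ sSup J from sInf_eq_iInf' C ▸ le_sSup hX
      exact hfix ▸ χ.monotone hXJ
    have hcoE : IsCoatom (E (sSup J)) := (E.isCoatom_iff _).mpr (hA.2 _ hH)
    exact (hcoE.le_iff.mp hle).resolve_left (hB.2 _ (coe_orderIso_mem hA hB χ hH)).1

theorem eq_image_of_coe_orderIso_eq {A B S : Set (Submodule K V)} (hA : IsCentralArr A)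
    (hB : IsCentralArr B) (hSA : S ⊆ A) (hgen : genSpan A S = A) (χ : lat A ≃o lat B)
    (E : Submodule K V ≃o Submodule K V)
    (hS : ∀ H (hH : H ∈ S), (χ ⟨H, mem_lat_of_mem (hSA hH)⟩ : Submodule K V) = E H) :
    B = E '' A := by
  have hAE : ∀ H (hH : H ∈ A), (χ ⟨H, mem_lat_of_mem hH⟩ : Submodule K V) = E H :=
    fun H hH => coe_orderIso_eq_of_mem_genSpan hA hB hSA χ E hS hH (hgen.symm ▸ hH)
  ext H'
  constructor
  · intro hH'
    have hXA := coe_orderIso_mem hB hA χ.symm hH'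
    refine ⟨_, hXA, ?_⟩
    rw [← hAE _ hXA]
    simp
  · rintro ⟨H, hH, rfl⟩
    rw [← hAE H hH]
    exact coe_orderIso_mem hA hB χ hH

end LatticeIsomorphism

/-- An essential irreducible central arrangement in `K^ℓ`
generated by a subset of `ℓ + 1` hyperplanes is projectively unique. -/
theorem projUnique_of_gen (K : Type) [Field K] (ℓ : ℕ)
    (A : Set (Submodule K (Fin ℓ → K)))
    (hA : IsCentralArr A) (hess : sInf A = ⊥) (hirr : IsIrredArr A)
    (S : Set (Submodule K (Fin ℓ → K))) (hSA : S ⊆ A)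
    (hgen : genSpan A S = A) (hcard : S.ncard = ℓ + 1) :
    ProjUnique A := by
  intro B hB ⟨ψ⟩
  have hV : finrank K (Fin ℓ → K) = ℓ := finrank_fin_fun K
  have hbot : ⊥ ∉ A := by
    refine bot_notMem_of_one_lt_ncard hA.2 hSA ?_
    obtain ⟨H, hH⟩ := Set.nonempty_of_ncard_ne_zero (by omega : S.ncard ≠ 0)
    have := finrank_add_one_of_isCoatom (hA.2 H (hSA hH))
    omega
  obtain ⟨h, rfl⟩ : ∃ h : Fin (ℓ + 1) → Submodule K (Fin ℓ → K), Set.range h = S := by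
    have : Finite S := (hA.1.subset hSA).to_subtype
    obtain ⟨e⟩ : Nonempty (Fin (ℓ + 1) ≃ S) :=
      Finite.card_eq.mp (by rw [Nat.card_fin, Nat.card_coe_set_eq, hcard])
    exact ⟨fun j => e j, (e.surjective.range_comp Subtype.val).trans Subtype.range_coe⟩
  have hhA : ∀ j, h j ∈ A := fun j => hSA ⟨j, rfl⟩
  have hgp : InGeneralPosition h := inGeneralPosition_of_genSpan hA.2 hbot hirr hhA hgen
    (sInf_range (f := h) ▸ sInf_eq_bot_of_genSpan hbot hgen hess)
  obtain ⟨φ, hφ⟩ := hgp.exists_linearEquiv_comap_eq hV (fun j => hA.2 _ (hhA j))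
    (fun j => hB.2 _ (coe_orderIso_mem hA hB ψ.symm (hhA j))) (hgp.orderIso hA hB ψ.symm hhA)
  have hBA := eq_image_of_coe_orderIso_eq hA hB hSA hgen ψ.symm (orderIsoMapComap φ).symm
    (by rintro _ ⟨j, rfl⟩; exact hφ j)
  exact ⟨φ, hBA ▸ ((orderIsoMapComap φ).image_symm_image A).symm⟩
end

section
/- For n ≥ 2, let B_n be the arrangement in ℚ^n with coordinates x_0,…,x_{n−1} given by B_n = A_{P_n} ∪ {H_1,…,H_{n−1}}, where A_{P_n} is the connected subgraph arrangement of the path graph on the consecutively labelled vertices 0,1,…,n−1 and H_k = ker(2x_0 + x_1 + ⋯ + x_k) for k = 1,…,n−1. Then the partition π with blocks π_1 = {ker(x_0)} and π_k = {ker(x_j + ⋯ + x_{k−1}) : j} ∪ {H_{k−1}} for k = 2,…,n is an inductive factorization of B_n; in particular B_n is inductively free with exponents (1, 3, 4, …, n+1). -/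
open Submodule

/-- The hyperplane `ker (x_j + ⋯ + x_{k-1})` in `ℚ^n`. -/
noncomputable def segHyp (n j k : ℕ) : Submodule ℚ (Fin n → ℚ) :=
  hypI n ℚ (Finset.univ.filter fun i : Fin n => j ≤ i.1 ∧ i.1 < k)

/-- The hyperplane `H_k = ker (2x_0 + x_1 + ⋯ + x_k)` in `ℚ^n`. -/
noncomputable def doubleHyp (n k : ℕ) : Submodule ℚ (Fin n → ℚ) :=
  LinearMap.ker ((sumForm n ℚ (Finset.univ.filter fun i : Fin n => i.1 = 0)) +
    sumForm n ℚ (Finset.univ.filter fun i : Fin n => i.1 ≤ k))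

/-- The arrangement `B_n = A_{P_n} ∪ {H_1, …, H_{n-1}}` in `ℚ^n` (coordinates
`x_0, …, x_{n-1}`). -/
noncomputable def BnArr (n : ℕ) : Set (Submodule ℚ (Fin n → ℚ)) :=
  connArr ℚ (pathGraph' n) ∪ {H | ∃ k, 1 ≤ k ∧ k ≤ n - 1 ∧ H = doubleHyp n k}

/-- The block `π_k = {ker(x_j + ⋯ + x_{k-1}) : j < k} ∪ {H_{k-1}}`. -/
noncomputable def BnBlock (n k : ℕ) : Set (Submodule ℚ (Fin n → ℚ)) :=
  {H | (∃ j, j < k ∧ H = segHyp n j k) ∨ H = doubleHyp n (k - 1)}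

/-- The partition `π = (π_1 | π_2 | … | π_n)` of `B_n` with `π_1 = {ker x_0}`. -/
noncomputable def BnPart (n : ℕ) : Set (Set (Submodule ℚ (Fin n → ℚ))) :=
  insert {segHyp n 0 1} {B | ∃ k, 2 ≤ k ∧ k ≤ n ∧ B = BnBlock n k}


/-!
Let `A(m)` be the union of the first `m` blocks `π_1, …, π_m` of `B_n`; its hyperplanes only
involve `x_0, …, x_{m-1}`. We pass from `A(m-1)` to `A(m)` by adding the members of `π_m` one at a
time, in the order `ker(x_0 + ⋯ + x_{m-1}), …, ker(x_{m-1}), H_{m-1}`. Each of them has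
coefficient `1` at `x_{m-1}`, so deleting that coordinate identifies it with `ℚ^{n-1}`; under this
identification the restriction of `A(m-1)`, with its partition, is the same arrangement one
dimension lower. The form of an earlier member of `π_m` minus that of the new hyperplane is a
multiple of a form of `A(m-1)`, so the earlier members restrict onto members of `A(m-1)` and the
restriction map is bijective off the current block. Thus every step is both an inductive
factorization step and an inductive freeness step raising the exponent of `π_m` by one. Induction
on `m`, for all dimensions at once, gives both claims, the exponents being the block sizes
`|π_1|, …, |π_n| = 1, 3, 4, …, n+1`.
-/

section DropCoord

variable {K : Type*} [Field K] {n : ℕ} (p : Fin (n + 1))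

def dropCoord : (Fin (n + 1) → K) →ₗ[K] (Fin n → K) :=
  LinearMap.funLeft K K p.succAbove

@[simp]
lemma dropCoord_apply (x : Fin (n + 1) → K) (i : Fin n) : dropCoord p x i = x (p.succAbove i) :=
  rfl

@[simp]
lemma dropCoord_single_self (a : K) : dropCoord p (Pi.single p a) = 0 := by
  ext i; simp [Fin.succAbove_ne]

@[simp]
lemma dropCoord_insertNth (a : K) (z : Fin n → K) : dropCoord p (p.insertNth a z) = z := by
  ext i; simp

variable {p} {g : (Fin (n + 1) → K) →ₗ[K] K}

lemma bijective_dropCoord_comp_subtype_ker (hg : g (Pi.single p 1) = 1) :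
    Function.Bijective (dropCoord p ∘ₗ (LinearMap.ker g).subtype) := by
  refine ⟨(injective_iff_map_eq_zero _).2 fun ⟨x, hx⟩ hdx => ?_, fun z => ?_⟩
  · have hdx : dropCoord p x = 0 := hdx
    have hx_eq : x = x p • Pi.single p 1 := by
      ext i
      cases i using p.succAboveCases
      · simp
      · simpa [Fin.succAbove_ne] using congrFun hdx _
    have hxp : x p = 0 := by
      simpa [hg, LinearMap.mem_ker.1 hx] using (congrArg g hx_eq).symm
    ext1
    change x = 0
    rw [hx_eq, hxp, zero_smul]
  · set w : Fin (n + 1) → K := p.insertNth 0 z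
    exact ⟨⟨w - g w • Pi.single p 1, by simp [hg]⟩, by simp [w]⟩

noncomputable def kerEquivDropCoord (hg : g (Pi.single p 1) = 1) :
    LinearMap.ker g ≃ₗ[K] (Fin n → K) :=
  LinearEquiv.ofBijective _ (bijective_dropCoord_comp_subtype_ker hg)

lemma map_kerEquivDropCoord_comap (hg : g (Pi.single p 1) = 1) (H : Submodule K (Fin n → K)) :
    ((H.comap (dropCoord p)).comap (LinearMap.ker g).subtype).map
      (kerEquivDropCoord hg : LinearMap.ker g →ₗ[K] (Fin n → K)) = H := by
  rw [← Submodule.comap_comp]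
  exact Submodule.map_comap_eq_of_surjective (kerEquivDropCoord hg).surjective H

lemma single_mem_comap_dropCoord (H : Submodule K (Fin n → K)) :
    Pi.single p 1 ∈ H.comap (dropCoord p) := by
  simp

lemma image_restrict_image_comap_dropCoord (hg : g (Pi.single p 1) = 1)
    (A : Set (Submodule K (Fin n → K))) :
    (fun Y => Y.map (kerEquivDropCoord hg : LinearMap.ker g →ₗ[K] (Fin n → K))) ''
      ((fun H => H.comap (LinearMap.ker g).subtype) '' (comap (dropCoord p) '' A)) = A := by
  simp only [Set.image_image, map_kerEquivDropCoord_comap, Set.image_id']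

lemma injOn_comap_subtype_ker (hg : g (Pi.single p 1) = 1) (A : Set (Submodule K (Fin n → K))) :
    Set.InjOn (fun H => H.comap (LinearMap.ker g).subtype) (comap (dropCoord p) '' A) := by
  rintro _ ⟨H₁, -, rfl⟩ _ ⟨H₂, -, rfl⟩ h
  have := congrArg
    (map (kerEquivDropCoord hg : LinearMap.ker g →ₗ[K] (Fin n → K))) h
  simp only [map_kerEquivDropCoord_comap] at this
  rw [this]

lemma ker_notMem_image_comap_dropCoord (hg : g (Pi.single p 1) = 1)
    (A : Set (Submodule K (Fin n → K))) : LinearMap.ker g ∉ comap (dropCoord p) '' A := by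
  rintro ⟨H, -, hH⟩
  have := single_mem_comap_dropCoord (p := p) H
  rw [hH, LinearMap.mem_ker, hg] at this
  exact one_ne_zero this

end DropCoord

lemma deletionPartition_eq {α : Type*} {S B : Set α} {a : α} {P : Set (Set α)}
    (ha : a ∉ S ∪ B) (hP : ∀ C ∈ P, C ⊆ S) :
    {C | ∃ B' ∈ insert (insert a B) P \ {∅}, C = B' ∩ (S ∪ B) ∧ C.Nonempty} =
      insert B P \ {∅} := by
  have hnew : insert a B ∩ (S ∪ B) = B := by
    rw [Set.insert_inter_of_notMem ha, Set.inter_eq_left.2 Set.subset_union_right]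
  have hold : ∀ C ∈ P, C ∩ (S ∪ B) = C := fun C hC =>
    Set.inter_eq_left.2 ((hP C hC).trans Set.subset_union_left)
  ext C
  simp only [Set.mem_ofPred_eq, Set.mem_sdiff, Set.mem_insert_iff, Set.mem_singleton_iff]
  constructor
  · rintro ⟨B', ⟨rfl | hB', -⟩, rfl, hne⟩
    · rw [hnew] at hne ⊢
      exact ⟨Or.inl rfl, hne.ne_empty⟩
    · rw [hold B' hB'] at hne ⊢
      exact ⟨Or.inr hB', hne.ne_empty⟩
  · rintro ⟨rfl | hC, hC0⟩
    · exact ⟨_, ⟨Or.inl rfl, (Set.insert_nonempty _ _).ne_empty⟩, hnew.symm,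
        Set.nonempty_iff_ne_empty.2 hC0⟩
    · exact ⟨C, ⟨Or.inr hC, hC0⟩, (hold C hC).symm, Set.nonempty_iff_ne_empty.2 hC0⟩

lemma union_insert_sdiff_singleton {α : Type*} {S B : Set α} {a : α} (ha : a ∉ S ∪ B) :
    (S ∪ insert a B) \ {a} = S ∪ B := by
  rw [Set.union_insert, Set.insert_sdiff_self_of_notMem ha]

lemma image_comap_subtype_union {K V : Type*} [Field K] [AddCommGroup V] [Module K V]
    {W : Submodule K V} {A B : Set (Submodule K V)}
    (hred : ∀ H ∈ B, ∃ H' ∈ A, H.comap W.subtype = H'.comap W.subtype) :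
    (fun H => H.comap W.subtype) '' (A ∪ B) = (fun H => H.comap W.subtype) '' A := by
  refine Set.Subset.antisymm ?_ (Set.image_mono Set.subset_union_left)
  rintro _ ⟨H, hH | hH, rfl⟩
  · exact ⟨H, hH, rfl⟩
  · obtain ⟨H', hH', h⟩ := hred H hH
    exact ⟨H', hH', h.symm⟩

section InsertHyperplane

variable {K : Type} [Field K] {n : ℕ} {p : Fin (n + 1)} {g : (Fin (n + 1) → K) →ₗ[K] K}
  {A : Set (Submodule K (Fin n → K))} {B : Set (Submodule K (Fin (n + 1) → K))}

lemma ker_notMem_union (hg : g (Pi.single p 1) = 1) (hgB : LinearMap.ker g ∉ B) :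
    LinearMap.ker g ∉ comap (dropCoord p) '' A ∪ B := by
  rintro (h | h)
  exacts [ker_notMem_image_comap_dropCoord hg A h, hgB h]

lemma restrictionPartition_eq (hg : g (Pi.single p 1) = 1)
    {P : Set (Set (Submodule K (Fin n → K)))} (hP : ∀ C ∈ P, C.Nonempty ∧ C ⊆ A) :
    {C | ∃ B' ∈ insert (insert (LinearMap.ker g) B) ((comap (dropCoord p) '' ·) '' P) \ {∅},
      B' ≠ insert (LinearMap.ker g) B ∧
      C = (fun Y => Y.map (kerEquivDropCoord hg : LinearMap.ker g →ₗ[K] (Fin n → K))) ''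
        ((fun H => H.comap (LinearMap.ker g).subtype) '' B')} = P := by
  ext C
  simp only [Set.mem_ofPred_eq, Set.mem_sdiff, Set.mem_insert_iff, Set.mem_singleton_iff]
  constructor
  · rintro ⟨B', ⟨rfl | ⟨C, hC, rfl⟩, -⟩, hB', rfl⟩
    · exact absurd rfl hB'
    · rwa [image_restrict_image_comap_dropCoord]
  · intro hC
    refine ⟨_, ⟨Or.inr ⟨C, hC, rfl⟩, ((hP C hC).1.image _).ne_empty⟩, fun h => ?_,
      (image_restrict_image_comap_dropCoord hg C).symm⟩
    have h : comap (dropCoord p) '' C = insert (LinearMap.ker g) B := h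
    refine ker_notMem_image_comap_dropCoord hg A (Set.image_mono (hP C hC).2 ?_)
    rw [h]
    exact Set.mem_insert _ _

theorem IndFactored.insert_of_pullback (hg : g (Pi.single p 1) = 1)
    {P : Set (Set (Submodule K (Fin n → K)))} (hP : ∀ C ∈ P, C.Nonempty ∧ C ⊆ A)
    (hB : ∀ H ∈ B, Pi.single p 1 ∉ H)
    (hgB : LinearMap.ker g ∉ B)
    (hred : ∀ H ∈ B, ∃ H' ∈ comap (dropCoord p) '' A,
      H.comap (LinearMap.ker g).subtype = H'.comap (LinearMap.ker g).subtype)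
    (hdel : IndFactored K (n + 1) (comap (dropCoord p) '' A ∪ B)
      (insert B ((comap (dropCoord p) '' ·) '' P) \ {∅}))
    (hres : IndFactored K n A P) :
    IndFactored K (n + 1) (comap (dropCoord p) '' A ∪ insert (LinearMap.ker g) B)
      (insert (insert (LinearMap.ker g) B) ((comap (dropCoord p) '' ·) '' P) \ {∅}) := by
  have hdelA := union_insert_sdiff_singleton (ker_notMem_union (A := A) hg hgB)
  have hdisj : Disjoint (comap (dropCoord p) '' A) (insert (LinearMap.ker g) B) := by
    refine Set.disjoint_insert_right.2 ⟨ker_notMem_image_comap_dropCoord hg A, ?_⟩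
    rw [Set.disjoint_left]
    rintro _ ⟨H, -, rfl⟩ hH
    exact hB _ hH (single_mem_comap_dropCoord H)
  refine IndFactored.step (n + 1) _ _ (insert (LinearMap.ker g) B) (LinearMap.ker g) n
    (kerEquivDropCoord hg) ⟨Set.mem_insert _ _, (Set.insert_nonempty _ _).ne_empty⟩
    (Set.mem_insert _ _) (Or.inr (Set.mem_insert _ _)) ?_ ?_ ?_
  · rw [Set.union_sdiff_cancel_right (Set.disjoint_iff.1 hdisj), hdelA,
      image_comap_subtype_union hred]
    exact (injOn_comap_subtype_ker hg A).bijOn_image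
  · have hP' : ∀ C ∈ (comap (dropCoord p) '' ·) '' P, C ⊆ comap (dropCoord p) '' A := by
      rintro _ ⟨C, hC, rfl⟩
      exact Set.image_mono (hP C hC).2
    rw [hdelA, deletionPartition_eq (ker_notMem_union hg hgB) hP']
    exact hdel
  · rw [hdelA, image_comap_subtype_union hred, image_restrict_image_comap_dropCoord,
      restrictionPartition_eq hg hP]
    exact hres

theorem IndFree.insert_of_pullback (hg : g (Pi.single p 1) = 1) (hgB : LinearMap.ker g ∉ B)
    (hred : ∀ H ∈ B, ∃ H' ∈ comap (dropCoord p) '' A,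
      H.comap (LinearMap.ker g).subtype = H'.comap (LinearMap.ker g).subtype)
    {k : ℕ} {E : Multiset ℕ}
    (hdel : IndFree K (n + 1) (comap (dropCoord p) '' A ∪ B) (k ::ₘ E))
    (hres : IndFree K n A E) :
    IndFree K (n + 1) (comap (dropCoord p) '' A ∪ insert (LinearMap.ker g) B)
      ((k + 1) ::ₘ E) := by
  have hdelA := union_insert_sdiff_singleton (ker_notMem_union (A := A) hg hgB)
  refine IndFree.step (n + 1) _ (LinearMap.ker g) n (kerEquivDropCoord hg) E k
    (Or.inr (Set.mem_insert _ _)) (hdelA ▸ hdel) ?_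
  rw [hdelA, image_comap_subtype_union hred, image_restrict_image_comap_dropCoord]
  exact hres

end InsertHyperplane

section CoordHyp

variable {K : Type*} [Field K]

-- Coefficients are indexed by `ℕ`, so that one `c` describes a hyperplane in every dimension.
noncomputable def coordForm (n : ℕ) (c : ℕ → K) : (Fin n → K) →ₗ[K] K :=
  ∑ i : Fin n, c i • LinearMap.proj i

noncomputable def coordHyp (n : ℕ) (c : ℕ → K) : Submodule K (Fin n → K) :=
  LinearMap.ker (coordForm n c)

lemma coordForm_apply (n : ℕ) (c : ℕ → K) (x : Fin n → K) :
    coordForm n c x = ∑ i : Fin n, c i * x i := by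
  simp [coordForm]

lemma coordForm_single (n : ℕ) (c : ℕ → K) (i : Fin n) (a : K) :
    coordForm n c (Pi.single i a) = c i * a := by
  simp [coordForm_apply, Pi.single_apply]

lemma mem_coordHyp {n : ℕ} {c : ℕ → K} {x : Fin n → K} :
    x ∈ coordHyp n c ↔ ∑ i : Fin n, c i * x i = 0 := by
  rw [coordHyp, LinearMap.mem_ker, coordForm_apply]

lemma coordHyp_smul (n : ℕ) {a : K} (ha : a ≠ 0) (c : ℕ → K) :
    coordHyp n (a • c) = coordHyp n c := by
  ext x
  simp [mem_coordHyp, mul_assoc, ← Finset.mul_sum, ha]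

lemma comap_subtype_coordHyp_sub_smul (n : ℕ) (c d : ℕ → K) (a : K) :
    (coordHyp n (c - a • d)).comap (coordHyp n d).subtype =
      (coordHyp n c).comap (coordHyp n d).subtype := by
  ext ⟨x, hx⟩
  rw [mem_coordHyp] at hx
  simp [mem_coordHyp, sub_mul, mul_assoc, Finset.sum_sub_distrib, ← Finset.mul_sum, hx]

lemma coordHyp_eq_comap_dropCoord {n : ℕ} (p : Fin (n + 1)) {c : ℕ → K}
    (hc : ∀ i, p.val ≤ i → c i = 0) :
    coordHyp (n + 1) c = (coordHyp n c).comap (dropCoord p) := by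
  have hcp : ∀ j : Fin n, c (p.succAbove j) = c j := by
    intro j
    rcases Fin.castSucc_lt_or_lt_succ p j with h | h
    · rw [Fin.succAbove_of_castSucc_lt _ _ h, Fin.val_castSucc]
    · have hpj : p.val ≤ j.val := by rw [Fin.lt_def, Fin.val_succ] at h; omega
      rw [Fin.succAbove_of_lt_succ _ _ h, Fin.val_succ, hc _ (by omega), hc _ hpj]
  ext x
  simp [mem_coordHyp, Fin.sum_univ_succAbove _ p, hc p le_rfl, hcp]

end CoordHyp

section PathGraph

variable {n : ℕ}

lemma pathGraph'_adj {a b : Fin n} :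
    (pathGraph' n).Adj a b ↔ a ≠ b ∧ (a.val + 1 = b.val ∨ b.val + 1 = a.val) := by
  rw [pathGraph', SimpleGraph.fromRel_adj]

abbrev pathInterval (n j k : ℕ) : Finset (Fin n) :=
  Finset.univ.filter fun i : Fin n => j ≤ i.val ∧ i.val < k

lemma induce_pathInterval_connected {j k : ℕ} (hjk : j < k) (hk : k ≤ n) :
    ((pathGraph' n).induce (pathInterval n j k : Set (Fin n))).Connected := by
  set G := (pathGraph' n).induce (pathInterval n j k : Set (Fin n))
  let vertex (i : ℕ) (hji : j ≤ i) (hik : i < k) : (pathInterval n j k : Set (Fin n)) :=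
    ⟨⟨i, by omega⟩, by simp [hji, hik]⟩
  have reach : ∀ i (hji : j ≤ i) (hik : i < k),
      G.Reachable (vertex j le_rfl hjk) (vertex i hji hik) := by
    intro i hji
    induction i, hji using Nat.le_induction with
    | base => exact fun _ => SimpleGraph.Reachable.refl _
    | succ i hji ih =>
      intro hik
      refine (ih (by omega)).trans (SimpleGraph.Adj.reachable ?_)
      simp [G, vertex, pathGraph'_adj, Fin.ext_iff]
  rw [SimpleGraph.connected_iff]
  refine ⟨fun u v => ?_, ⟨vertex j le_rfl hjk⟩⟩
  obtain ⟨⟨u, hu⟩, hu'⟩ := u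
  obtain ⟨⟨v, hv⟩, hv'⟩ := v
  simp only [Finset.coe_filter, Finset.mem_univ, true_and, Set.mem_ofPred_eq] at hu' hv'
  exact (reach u hu'.1 hu'.2).symm.trans (reach v hv'.1 hv'.2)

lemma exists_val_eq_of_walk {I : Set (Fin n)} {a b : I} (w : ((pathGraph' n).induce I).Walk a b) :
    ∀ v : ℕ, a.1.val ≤ v → v ≤ b.1.val → ∃ c : I, c.1.val = v := by
  induction w with
  | @nil u => exact fun v h1 h2 => ⟨u, by omega⟩
  | @cons u x b h w ih =>
    intro v hav hvb
    by_cases hv : u.1.val = v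
    · exact ⟨u, hv⟩
    · have hadj : (pathGraph' n).Adj u.1 x.1 := h
      have := (pathGraph'_adj.1 hadj).2
      exact ih v (by omega) hvb

lemma connSets_pathGraph' :
    connSets (pathGraph' n) = {I | ∃ j k, j < k ∧ k ≤ n ∧ I = pathInterval n j k} := by
  ext I
  constructor
  · rintro ⟨hne, hconn⟩
    refine ⟨(I.min' hne).val, (I.max' hne).val + 1,
      Nat.lt_succ_of_le (I.min'_le _ (I.max'_mem hne)), (I.max' hne).isLt, ?_⟩
    ext i
    simp only [Finset.mem_filter, Finset.mem_univ, true_and]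
    refine ⟨fun hi => ⟨I.min'_le i hi, Nat.lt_succ_of_le (I.le_max' i hi)⟩,
      fun ⟨h1, h2⟩ => ?_⟩
    obtain ⟨w⟩ := hconn.preconnected ⟨_, I.min'_mem hne⟩ ⟨_, I.max'_mem hne⟩
    obtain ⟨c, hc⟩ := exists_val_eq_of_walk w _ h1 (Nat.le_of_lt_succ h2)
    rw [← Fin.ext hc]
    exact c.2
  · rintro ⟨j, k, hjk, hk, rfl⟩
    exact ⟨⟨⟨j, by omega⟩, by simp [hjk]⟩, induce_pathInterval_connected hjk hk⟩

lemma connArr_pathGraph' :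
    connArr ℚ (pathGraph' n) = {H | ∃ j k, j < k ∧ k ≤ n ∧ H = segHyp n j k} := by
  rw [connArr, connSets_pathGraph']
  ext H
  constructor
  · rintro ⟨I, ⟨j, k, hjk, hk, rfl⟩, rfl⟩
    exact ⟨j, k, hjk, hk, rfl⟩
  · rintro ⟨j, k, hjk, hk, rfl⟩
    exact ⟨_, ⟨j, k, hjk, hk, rfl⟩, rfl⟩

end PathGraph

section Blocks

def segCoeff (j k : ℕ) (i : ℕ) : ℚ := if j ≤ i ∧ i < k then 1 else 0

def dblCoeff (k : ℕ) (i : ℕ) : ℚ := (if i = 0 then 1 else 0) + (if i ≤ k then 1 else 0)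

lemma sumForm_apply (n : ℕ) (K : Type*) [Field K] (I : Finset (Fin n)) (x : Fin n → K) :
    sumForm n K I x = ∑ i ∈ I, x i := by
  simp [sumForm]

lemma segHyp_eq_coordHyp (n j k : ℕ) : segHyp n j k = coordHyp n (segCoeff j k) := by
  ext x
  simp only [segHyp, hypI, LinearMap.mem_ker, sumForm_apply, mem_coordHyp, segCoeff,
    Finset.sum_filter, ite_mul, one_mul, zero_mul]

lemma doubleHyp_eq_coordHyp (n k : ℕ) : doubleHyp n k = coordHyp n (dblCoeff k) := by
  ext x
  simp only [doubleHyp, LinearMap.mem_ker, LinearMap.add_apply, sumForm_apply, mem_coordHyp,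
    dblCoeff, Finset.sum_filter, add_mul, ite_mul, one_mul, zero_mul, Finset.sum_add_distrib]

lemma dblCoeff_zero : dblCoeff 0 = (2 : ℚ) • segCoeff 0 1 := by
  ext i
  simp only [dblCoeff, segCoeff, Pi.smul_apply, smul_eq_mul]
  split_ifs <;> first | omega | norm_num

lemma doubleHyp_zero (n : ℕ) : doubleHyp n 0 = segHyp n 0 1 := by
  rw [doubleHyp_eq_coordHyp, dblCoeff_zero, coordHyp_smul _ two_ne_zero, segHyp_eq_coordHyp]

def blockCoeffs (k : ℕ) : Set (ℕ → ℚ) :=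
  {c | (∃ j < k, c = segCoeff j k) ∨ c = dblCoeff (k - 1)}

lemma BnBlock_eq_image (n k : ℕ) : BnBlock n k = coordHyp n '' blockCoeffs k := by
  ext H
  simp only [BnBlock, blockCoeffs, Set.mem_image, Set.mem_ofPred_eq, segHyp_eq_coordHyp,
    doubleHyp_eq_coordHyp]
  constructor
  · rintro (⟨j, hj, rfl⟩ | rfl)
    exacts [⟨_, Or.inl ⟨j, hj, rfl⟩, rfl⟩, ⟨_, Or.inr rfl, rfl⟩]
  · rintro ⟨c, ⟨j, hj, rfl⟩ | rfl, rfl⟩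
    exacts [Or.inl ⟨j, hj, rfl⟩, Or.inr rfl]

lemma blockCoeffs_apply_of_le {k : ℕ} {c : ℕ → ℚ} (hc : c ∈ blockCoeffs k) {i : ℕ}
    (hi : k ≤ i) (hk : 1 ≤ k) : c i = 0 := by
  rcases hc with ⟨j, -, rfl⟩ | rfl
  · simp only [segCoeff]; split_ifs <;> first | omega | rfl
  · simp only [dblCoeff]; split_ifs <;> first | omega | norm_num

end Blocks

section Truncation

lemma BnBlock_succ_eq_image_comap {n k : ℕ} (p : Fin (n + 1)) (hk : 1 ≤ k) (hkp : k ≤ p.val) :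
    BnBlock (n + 1) k = comap (dropCoord p) '' BnBlock n k := by
  rw [BnBlock_eq_image, BnBlock_eq_image, Set.image_image]
  exact Set.image_congr fun c hc =>
    coordHyp_eq_comap_dropCoord p fun i hi => blockCoeffs_apply_of_le hc (hkp.trans hi) hk

def truncPart (n m : ℕ) : Set (Set (Submodule ℚ (Fin n → ℚ))) :=
  {B | ∃ k, 1 ≤ k ∧ k ≤ m ∧ B = BnBlock n k}

def truncArr (n m : ℕ) : Set (Submodule ℚ (Fin n → ℚ)) :=
  ⋃₀ truncPart n m

lemma truncPart_zero (n : ℕ) : truncPart n 0 = ∅ := by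
  ext; simp [truncPart]

lemma truncArr_zero (n : ℕ) : truncArr n 0 = ∅ := by
  simp [truncArr, truncPart_zero]

lemma truncPart_succ (n m : ℕ) :
    truncPart n (m + 1) = insert (BnBlock n (m + 1)) (truncPart n m) := by
  ext B
  simp only [truncPart, Set.mem_ofPred_eq, Set.mem_insert_iff]
  constructor
  · rintro ⟨k, hk1, hkm, rfl⟩
    rcases Nat.lt_or_ge k (m + 1) with h | h
    · exact Or.inr ⟨k, hk1, by omega, rfl⟩
    · exact Or.inl (by rw [show k = m + 1 by omega])
  · rintro (rfl | ⟨k, hk1, hkm, rfl⟩)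
    exacts [⟨m + 1, by omega, le_rfl, rfl⟩, ⟨k, hk1, by omega, rfl⟩]

lemma truncArr_succ (n m : ℕ) : truncArr n (m + 1) = truncArr n m ∪ BnBlock n (m + 1) := by
  rw [truncArr, truncPart_succ, Set.sUnion_insert, Set.union_comm, truncArr]

lemma truncPart_succ_eq_image_comap {n m : ℕ} (p : Fin (n + 1)) (hm : m ≤ p.val) :
    truncPart (n + 1) m = (comap (dropCoord p) '' ·) '' truncPart n m := by
  ext B
  simp only [truncPart, Set.mem_ofPred_eq, Set.mem_image]
  constructor
  · rintro ⟨k, hk1, hkm, rfl⟩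
    exact ⟨_, ⟨k, hk1, hkm, rfl⟩, (BnBlock_succ_eq_image_comap p hk1 (hkm.trans hm)).symm⟩
  · rintro ⟨_, ⟨k, hk1, hkm, rfl⟩, rfl⟩
    exact ⟨k, hk1, hkm, (BnBlock_succ_eq_image_comap p hk1 (hkm.trans hm)).symm⟩

lemma truncArr_succ_eq_image_comap {n m : ℕ} (p : Fin (n + 1)) (hm : m ≤ p.val) :
    truncArr (n + 1) m = comap (dropCoord p) '' truncArr n m := by
  rw [truncArr, truncArr, truncPart_succ_eq_image_comap p hm, Set.image_sUnion, Set.sUnion_image]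

lemma nonempty_subset_of_mem_truncPart {n m : ℕ} {B : Set (Submodule ℚ (Fin n → ℚ))}
    (hB : B ∈ truncPart n m) : B.Nonempty ∧ B ⊆ truncArr n m := by
  refine ⟨?_, Set.subset_sUnion_of_mem hB⟩
  obtain ⟨k, hk, -, rfl⟩ := hB
  exact ⟨segHyp n 0 k, Or.inl ⟨0, hk, rfl⟩⟩

lemma empty_notMem_truncPart (n m : ℕ) : ∅ ∉ truncPart n m :=
  fun h => (nonempty_subset_of_mem_truncPart h).1.ne_empty rfl

end Truncation

section BlockOrder

-- `π_1 = {ker x_0}` has a single member because `H_0 = ker (2 x_0) = ker x_0`.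
def blockSize (m : ℕ) : ℕ := if m = 1 then 1 else m + 1

lemma lt_blockSize_succ {M t : ℕ} (ht : t < blockSize (M + 1)) :
    t ≤ M ∨ 1 ≤ M ∧ t = M + 1 := by
  simp only [blockSize] at ht
  split_ifs at ht <;> omega

def blockCoeff (m t i : ℕ) : ℚ := if t < m then segCoeff t m i else dblCoeff (m - 1) i

lemma blockCoeff_of_lt {m t : ℕ} (h : t < m) : blockCoeff m t = segCoeff t m :=
  funext fun _ => if_pos h

lemma blockCoeff_of_le {m t : ℕ} (h : m ≤ t) : blockCoeff m t = dblCoeff (m - 1) :=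
  funext fun _ => if_neg (by omega)

def blockPrefix (n m t : ℕ) : Set (Submodule ℚ (Fin n → ℚ)) :=
  {H | ∃ i < t, H = coordHyp n (blockCoeff m i)}

lemma blockPrefix_zero (n m : ℕ) : blockPrefix n m 0 = ∅ := by
  simp [blockPrefix]

lemma blockPrefix_succ (n m t : ℕ) :
    blockPrefix n m (t + 1) = insert (coordHyp n (blockCoeff m t)) (blockPrefix n m t) := by
  ext H
  simp only [blockPrefix, Set.mem_ofPred_eq, Set.mem_insert_iff]
  constructor
  · rintro ⟨i, hi, rfl⟩
    rcases Nat.lt_or_ge i t with h | h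
    · exact Or.inr ⟨i, h, rfl⟩
    · exact Or.inl (by rw [show i = t by omega])
  · rintro (rfl | ⟨i, hi, rfl⟩)
    exacts [⟨t, by omega, rfl⟩, ⟨i, by omega, rfl⟩]

lemma BnBlock_eq_blockPrefix (n m : ℕ) :
    BnBlock n m = blockPrefix n m (blockSize m) := by
  ext H
  simp only [BnBlock, blockPrefix, blockSize, Set.mem_ofPred_eq]
  split_ifs with hm1
  · subst hm1
    simp [blockCoeff_of_lt, doubleHyp_zero, segHyp_eq_coordHyp]
  · rw [Nat.exists_lt_succ_right, blockCoeff_of_le le_rfl, doubleHyp_eq_coordHyp]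
    refine or_congr (exists_congr fun i => and_congr_right fun hi => ?_) Iff.rfl
    rw [blockCoeff_of_lt hi, segHyp_eq_coordHyp]

lemma blockCoeff_apply_self {M t : ℕ} (ht : t < blockSize (M + 1)) :
    blockCoeff (M + 1) t M = 1 := by
  simp only [blockSize, blockCoeff, segCoeff, dblCoeff] at ht ⊢
  split_ifs at ht ⊢ <;> first | omega | norm_num

lemma single_mem_coordHyp {n : ℕ} {c : ℕ → ℚ} {i : Fin n} :
    Pi.single i 1 ∈ coordHyp n c ↔ c i = 0 := by
  rw [coordHyp, LinearMap.mem_ker, coordForm_single, mul_one]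

lemma coordHyp_blockCoeff_ne {n M i t : ℕ} (hM : M < n) (hit : i < t)
    (ht : t < blockSize (M + 1)) :
    coordHyp n (blockCoeff (M + 1) i) ≠ coordHyp n (blockCoeff (M + 1) t) := by
  intro h
  rcases Nat.lt_or_ge t (M + 1) with htM | htM
  · have hi : Pi.single (⟨i, by omega⟩ : Fin n) 1 ∈ coordHyp n (blockCoeff (M + 1) t) := by
      rw [single_mem_coordHyp]
      simp only [blockCoeff, segCoeff]
      split_ifs <;> first | omega | rfl
    rw [← h, single_mem_coordHyp] at hi
    simp only [blockCoeff, segCoeff] at hi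
    split_ifs at hi <;> first | omega | norm_num at hi
  · -- `e₀ - 2 e_M` lies on `H_M` but on no `ker (x_i + ⋯ + x_M)`
    have hM0 := (lt_blockSize_succ ht).resolve_left (by omega)
    have key : ∀ c : ℕ → ℚ,
        Pi.single (⟨0, by omega⟩ : Fin n) 1 - Pi.single ⟨M, hM⟩ 2 ∈ coordHyp n c ↔
          c 0 - c M * 2 = 0 := fun c => by
      rw [coordHyp, LinearMap.mem_ker, map_sub, coordForm_single, coordForm_single, mul_one]
    have ht' := (key _).2 (show blockCoeff (M + 1) t 0 - blockCoeff (M + 1) t M * 2 = 0 by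
      simp only [blockCoeff, dblCoeff]
      split_ifs <;> first | omega | norm_num)
    rw [← h, key] at ht'
    simp only [blockCoeff, segCoeff] at ht'
    split_ifs at ht' <;> first | omega | norm_num at ht'

lemma segCoeff_sub_segCoeff {i t m : ℕ} (hit : i < t) (htm : t ≤ m) :
    segCoeff i m - (1 : ℚ) • segCoeff t m = segCoeff i t := by
  ext k
  simp only [segCoeff, Pi.sub_apply, one_smul]
  split_ifs <;> first | omega | norm_num

lemma segCoeff_sub_dblCoeff {i M : ℕ} (hi : i ≤ M) :
    segCoeff i (M + 1) - (1 : ℚ) • dblCoeff M =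
      (-1 : ℚ) • (segCoeff 0 1 + segCoeff 0 i) := by
  ext k
  simp only [segCoeff, dblCoeff, Pi.sub_apply, Pi.add_apply, Pi.smul_apply, smul_eq_mul]
  split_ifs <;> first | omega | norm_num

lemma segCoeff_zero_one_add {i : ℕ} (hi : 1 ≤ i) :
    segCoeff 0 1 + segCoeff 0 i = dblCoeff (i - 1) := by
  ext k
  simp only [segCoeff, dblCoeff, Pi.add_apply]
  split_ifs <;> first | omega | norm_num

lemma mem_truncArr {n k m : ℕ} {H : Submodule ℚ (Fin n → ℚ)} (hH : H ∈ BnBlock n k)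
    (hk : 1 ≤ k) (hkm : k ≤ m) : H ∈ truncArr n m :=
  ⟨BnBlock n k, ⟨k, hk, hkm, rfl⟩, hH⟩

lemma exists_comap_blockCoeff_eq {n M i t : ℕ} (hit : i < t) (ht : t < blockSize (M + 1)) :
    ∃ H ∈ truncArr n M, (coordHyp n (blockCoeff (M + 1) i)).comap
      (coordHyp n (blockCoeff (M + 1) t)).subtype =
        H.comap (coordHyp n (blockCoeff (M + 1) t)).subtype := by
  rw [← comap_subtype_coordHyp_sub_smul n _ _ 1]
  rcases Nat.lt_or_ge t (M + 1) with htM | htM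
  · rw [blockCoeff_of_lt htM, blockCoeff_of_lt (hit.trans htM),
      segCoeff_sub_segCoeff hit htM.le]
    exact ⟨segHyp n i t, mem_truncArr (Or.inl ⟨i, hit, rfl⟩) (by omega) (by omega),
      by rw [segHyp_eq_coordHyp]⟩
  · have hM := (lt_blockSize_succ ht).resolve_left (by omega)
    rw [blockCoeff_of_le htM, blockCoeff_of_lt (by omega), Nat.add_sub_cancel,
      segCoeff_sub_dblCoeff (by omega), coordHyp_smul _ (by norm_num)]
    refine ⟨_, ?_, rfl⟩
    rcases Nat.eq_zero_or_pos i with rfl | hi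
    · rw [show segCoeff 0 0 = 0 by ext; simp [segCoeff], add_zero, ← segHyp_eq_coordHyp]
      exact mem_truncArr (Or.inl ⟨0, one_pos, rfl⟩) le_rfl hM.1
    · rw [segCoeff_zero_one_add hi, ← doubleHyp_eq_coordHyp]
      exact mem_truncArr (Or.inr rfl) hi (by omega)

end BlockOrder

section Induction

def truncExps (n m : ℕ) : Multiset ℕ :=
  (Multiset.range m).map (fun k => blockSize (k + 1)) + Multiset.replicate (n - m) 0

lemma zero_cons_truncExps {n m : ℕ} (h : m ≤ n) :
    0 ::ₘ truncExps n m = truncExps (n + 1) m := by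
  rw [truncExps, truncExps, show n + 1 - m = n - m + 1 by omega, Multiset.replicate_succ,
    Multiset.add_cons]

lemma blockSize_cons_truncExps (n m : ℕ) :
    blockSize (m + 1) ::ₘ truncExps n m = truncExps (n + 1) (m + 1) := by
  rw [truncExps, truncExps, Multiset.range_succ, Multiset.map_cons, Nat.add_sub_add_right,
    Multiset.cons_add]

-- Removing `∅` discards the block of `π_{M+1}` while it is still empty (`t = 0`).
lemma indFactored_indFree_blockPrefix {n M : ℕ} (hM : M ≤ n)
    (hdel : IndFactored ℚ (n + 1) (truncArr (n + 1) M) (truncPart (n + 1) M) ∧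
      IndFree ℚ (n + 1) (truncArr (n + 1) M) (truncExps (n + 1) M))
    (hres : IndFactored ℚ n (truncArr n M) (truncPart n M) ∧
      IndFree ℚ n (truncArr n M) (truncExps n M))
    {t : ℕ} (ht : t ≤ blockSize (M + 1)) :
    IndFactored ℚ (n + 1) (truncArr (n + 1) M ∪ blockPrefix (n + 1) (M + 1) t)
        (insert (blockPrefix (n + 1) (M + 1) t) (truncPart (n + 1) M) \ {∅}) ∧
      IndFree ℚ (n + 1) (truncArr (n + 1) M ∪ blockPrefix (n + 1) (M + 1) t)
        (t ::ₘ truncExps n M) := by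
  induction t with
  | zero =>
    rw [blockPrefix_zero, Set.union_empty, Set.insert_sdiff_of_mem _ (Set.mem_singleton _),
      Set.sdiff_singleton_eq_self (empty_notMem_truncPart _ _), zero_cons_truncExps hM]
    exact hdel
  | succ t ih =>
    set p : Fin (n + 1) := ⟨M, by omega⟩
    have hg : coordForm (n + 1) (blockCoeff (M + 1) t) (Pi.single p 1) = 1 := by
      rw [coordForm_single, mul_one]
      exact blockCoeff_apply_self ht
    have hA := truncArr_succ_eq_image_comap p le_rfl
    have hP := truncPart_succ_eq_image_comap p le_rfl
    have hB : ∀ H ∈ blockPrefix (n + 1) (M + 1) t, Pi.single p 1 ∉ H := by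
      rintro _ ⟨i, hi, rfl⟩
      rw [single_mem_coordHyp, blockCoeff_apply_self (by omega)]
      exact one_ne_zero
    have hgB : coordHyp (n + 1) (blockCoeff (M + 1) t) ∉ blockPrefix (n + 1) (M + 1) t := by
      rintro ⟨i, hi, h⟩
      exact coordHyp_blockCoeff_ne (by omega) hi ht h.symm
    have hred : ∀ H ∈ blockPrefix (n + 1) (M + 1) t,
        ∃ H' ∈ comap (dropCoord p) '' truncArr n M,
          H.comap (coordHyp (n + 1) (blockCoeff (M + 1) t)).subtype =
            H'.comap (coordHyp (n + 1) (blockCoeff (M + 1) t)).subtype := by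
      rintro _ ⟨i, hi, rfl⟩
      rw [← hA]
      exact exists_comap_blockCoeff_eq hi ht
    have ih := ih (by omega)
    rw [hA, hP] at ih ⊢
    rw [blockPrefix_succ]
    exact ⟨IndFactored.insert_of_pullback hg (fun _ h => nonempty_subset_of_mem_truncPart h)
      hB hgB hred ih.1 hres.1, IndFree.insert_of_pullback hg hgB hred ih.2 hres.2⟩

theorem indFactored_indFree_truncArr (m : ℕ) :
    ∀ n, m ≤ n → IndFactored ℚ n (truncArr n m) (truncPart n m) ∧
      IndFree ℚ n (truncArr n m) (truncExps n m) := by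
  induction m with
  | zero =>
    intro n _
    rw [truncArr_zero, truncPart_zero]
    exact ⟨IndFactored.empty n, by simpa [truncExps] using IndFree.empty (K := ℚ) n⟩
  | succ M ih =>
    rintro (_ | n) hn
    · omega
    have h := indFactored_indFree_blockPrefix (by omega) (ih (n + 1) (by omega)) (ih n (by omega))
      le_rfl
    rwa [← BnBlock_eq_blockPrefix, ← truncPart_succ, Set.sdiff_singleton_eq_self
      (empty_notMem_truncPart _ _), ← truncArr_succ, blockSize_cons_truncExps] at h

end Induction

lemma BnArr_eq_truncArr (n : ℕ) : BnArr n = truncArr n n := by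
  ext H
  simp only [BnArr, connArr_pathGraph', truncArr, truncPart, Set.mem_union, Set.mem_ofPred_eq,
    Set.mem_sUnion]
  constructor
  · rintro (⟨j, k, hjk, hkn, rfl⟩ | ⟨k, hk, hkn, rfl⟩)
    · exact ⟨_, ⟨k, by omega, hkn, rfl⟩, Or.inl ⟨j, hjk, rfl⟩⟩
    · exact ⟨_, ⟨k + 1, by omega, by omega, rfl⟩, Or.inr rfl⟩
  · rintro ⟨_, ⟨k, hk, hkn, rfl⟩, ⟨j, hjk, rfl⟩ | rfl⟩
    · exact Or.inl ⟨j, k, hjk, hkn, rfl⟩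
    · rcases Nat.lt_or_ge k 2 with h | h
      · rw [show k - 1 = 0 by omega, doubleHyp_zero]
        exact Or.inl ⟨0, 1, one_pos, by omega, rfl⟩
      · exact Or.inr ⟨k - 1, by omega, by omega, rfl⟩

lemma BnBlock_one (n : ℕ) : BnBlock n 1 = {segHyp n 0 1} := by
  ext H
  simp [BnBlock, doubleHyp_zero]

lemma BnPart_eq_truncPart {n : ℕ} (hn : 1 ≤ n) : BnPart n = truncPart n n := by
  ext B
  simp only [BnPart, truncPart, Set.mem_insert_iff, Set.mem_ofPred_eq]
  constructor
  · rintro (rfl | ⟨k, hk, hkn, rfl⟩)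
    exacts [⟨1, le_rfl, hn, (BnBlock_one n).symm⟩, ⟨k, by omega, hkn, rfl⟩]
  · rintro ⟨k, hk, hkn, rfl⟩
    rcases Nat.lt_or_ge k 2 with h | h
    · exact Or.inl (by rw [show k = 1 by omega, BnBlock_one])
    · exact Or.inr ⟨k, h, hkn, rfl⟩

lemma truncExps_self {n : ℕ} (hn : 1 ≤ n) :
    truncExps n n = 1 ::ₘ (Multiset.range (n - 1)).map (fun i => i + 3) := by
  obtain ⟨n, rfl⟩ : ∃ n', n = 1 + n' := ⟨n - 1, by omega⟩
  rw [truncExps, Nat.sub_self, Multiset.replicate_zero, add_zero, Multiset.range_add,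
    Multiset.map_add, Multiset.map_map, Nat.add_sub_cancel_left]
  simp only [Multiset.range_succ, Multiset.range_zero, Multiset.cons_zero, blockSize,
    Nat.add_eq_right, Multiset.map_singleton, ↓reduceIte, Function.comp_apply,
    Nat.add_eq_zero_iff, one_ne_zero, false_and, Multiset.singleton_add, Multiset.cons_inj_right]
  exact Multiset.map_congr rfl fun k _ => by omega

/-- For `n ≥ 2` the partition `π` is an inductive factorization
of `B_n`; in particular `B_n` is inductively free with exponents
`(1, 3, 4, …, n+1)`. -/
theorem BnArr_indFactored (n : ℕ) (hn : 2 ≤ n) :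
    IndFactored ℚ n (BnArr n) (BnPart n) ∧
    IndFree ℚ n (BnArr n) (1 ::ₘ (Multiset.range (n - 1)).map (fun i => i + 3)) := by
  rw [BnArr_eq_truncArr, BnPart_eq_truncPart (by omega), ← truncExps_self (by omega)]
  exact indFactored_indFree_truncArr n n le_rfl
end
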